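/- Let Γ be any lattice in Sol, i.e., a discrete subgroup such that the coset space M = Sol/Γ is compact. Then M is non-blockable; more precisely, the set of pairs (m₁, m₂) ∈ M × M that are not blockable is dense in M × M (with the product of the quotient topologies). -/

import Mathlib

noncomputable section

/-- The group `Sol`: underlying set `ℝ³` with multiplication
`(x₁,y₁,z₁)·(x₂,y₂,z₂) = (x₁ + e^{z₁}x₂, y₁ + e^{−z₁}y₂, z₁ + z₂)`. -/
def Sol : Type := ℝ × ℝ × ℝ

namespace Sol

instance : TopologicalSpace Sol := inferInstanceAs (TopologicalSpace (ℝ × ℝ × ℝ))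

/-- Build an element of `Sol` from coordinates. -/
def mk (x y z : ℝ) : Sol := ((x, y, z) : ℝ × ℝ × ℝ)

/-- First coordinate. -/
def X (g : Sol) : ℝ := (show ℝ × ℝ × ℝ from g).1
/-- Second coordinate. -/
def Y (g : Sol) : ℝ := (show ℝ × ℝ × ℝ from g).2.1
/-- Third coordinate. -/
def Z (g : Sol) : ℝ := (show ℝ × ℝ × ℝ from g).2.2

theorem ext {a b : Sol} (h1 : X a = X b) (h2 : Y a = Y b) (h3 : Z a = Z b) : a = b :=
  show (show ℝ × ℝ × ℝ from a) = (show ℝ × ℝ × ℝ from b) from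
    Prod.ext h1 (Prod.ext h2 h3)

instance : One Sol := ⟨mk 0 0 0⟩
instance : Mul Sol :=
  ⟨fun a b => mk (X a + Real.exp (Z a) * X b) (Y a + Real.exp (-Z a) * Y b) (Z a + Z b)⟩
instance : Inv Sol :=
  ⟨fun a => mk (-(Real.exp (-Z a) * X a)) (-(Real.exp (Z a) * Y a)) (-Z a)⟩

@[simp] theorem X_mk (x y z : ℝ) : X (mk x y z) = x := rfl
@[simp] theorem Y_mk (x y z : ℝ) : Y (mk x y z) = y := rfl
@[simp] theorem Z_mk (x y z : ℝ) : Z (mk x y z) = z := rfl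

@[simp] theorem X_one : X (1 : Sol) = 0 := rfl
@[simp] theorem Y_one : Y (1 : Sol) = 0 := rfl
@[simp] theorem Z_one : Z (1 : Sol) = 0 := rfl

@[simp] theorem X_mul (a b : Sol) : X (a * b) = X a + Real.exp (Z a) * X b := rfl
@[simp] theorem Y_mul (a b : Sol) : Y (a * b) = Y a + Real.exp (-Z a) * Y b := rfl
@[simp] theorem Z_mul (a b : Sol) : Z (a * b) = Z a + Z b := rfl

@[simp] theorem X_inv (a : Sol) : X a⁻¹ = -(Real.exp (-Z a) * X a) := rfl
@[simp] theorem Y_inv (a : Sol) : Y a⁻¹ = -(Real.exp (Z a) * Y a) := rfl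
@[simp] theorem Z_inv (a : Sol) : Z a⁻¹ = -Z a := rfl

instance : Group Sol :=
  Group.ofLeftAxioms
    (fun a b c => ext
      (by simp [Real.exp_add]; ring)
      (by simp [Real.exp_add, neg_add]; ring)
      (by simp; ring))
    (fun a => ext (by simp) (by simp) (by simp))
    (fun a => ext (by simp) (by simp) (by simp))

/-- A (continuous) one-parameter subgroup of `Sol`: a continuous group homomorphism
from `(ℝ,+)` to `Sol`. -/
def IsOneParam (σ : ℝ → Sol) : Prop :=
  Continuous σ ∧ ∀ s t : ℝ, σ (s + t) = σ s * σ t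

/-- A pair of points `m₁ m₂` of the homogeneous space `Sol ⧸ Γ` is blockable if some finite
set `B` avoiding `m₁, m₂` meets every connecting curve `t ↦ σ(t)•m₁`, `t ∈ [0,1]`, where
`σ` is a one-parameter subgroup with `σ(1)•m₁ = m₂`. -/
def Blockable (Γ : Subgroup Sol) (m₁ m₂ : Sol ⧸ Γ) : Prop :=
  ∃ B : Finset (Sol ⧸ Γ), m₁ ∉ B ∧ m₂ ∉ B ∧
    ∀ σ : ℝ → Sol, IsOneParam σ → σ 1 • m₁ = m₂ →
      ∃ t ∈ Set.Icc (0 : ℝ) 1, σ t • m₁ ∈ B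

end Sol


/-!
Since `Sol/Γ` is compact, `Γ` contains some `γ₀` with `Z γ₀ ≠ 0`; otherwise `Z` would descend to
a continuous surjection `Sol/Γ → ℝ`. Such a `γ₀` lies on a one-parameter subgroup, so for every `h`
and `n` the one-parameter subgroup through `h γ₀ⁿ` is a connecting curve from `Γ` to `hΓ`. A finite
blocking set would meet infinitely many of these curves at interior times, so two of them, say for
`n ≠ m`, would pass through the same point of `Sol/Γ`: `c_n(s) γ = c_m(t)` with `γ ∈ Γ`.
Eliminating `s` and `t` from the three coordinates of this equation leaves an equation in `h`,
bilinear in the two coordinates of `h` transverse to the subgroup through `γ₀`; it is not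
identically zero unless `γ` lies on that subgroup, a case the coordinate equations exclude
directly. So for each of the countably many triples `(n, m, γ)` its solutions form a nowhere
dense set, and by Baire the pair `(Γ, hΓ)` is non-blockable for a residual set of `h`. Left
translations preserve blockability, which gives density in `Sol/Γ × Sol/Γ`.
-/

open Real Filter Topology

theorem eventually_residual_imp_ne {X Y : Type*} [TopologicalSpace X] [TopologicalSpace Y]
    [T1Space Y] {f : X → Y} (hf : Continuous f) {y : Y} {p : X → Prop}
    (hp : ∀ x, p x → ∃ᶠ x' in 𝓝 x, f x' ≠ y) : ∀ᶠ x in residual X, p x → f x ≠ y := by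
  have hC : IsClosed {x | f x = y} := isClosed_singleton.preimage hf
  have hS : IsNowhereDense {x | p x ∧ f x = y} :=
    isNowhereDense_iff_forall_notMem_nhds.2 fun x hx hnhds =>
      hp x hx.1 <| Filter.mem_of_superset hnhds fun x' hx' hne =>
        hne (closure_minimal (fun _ hz => hz.2) hC hx')
  filter_upwards [hS.isMeagre] with x hx hpx hfx using hx ⟨hpx, hfx⟩

theorem frequently_bilinear_ne_zero {c₀ c₁ c₂ c₃ : ℝ}
    (hc : ¬(c₀ = 0 ∧ c₁ = 0 ∧ c₂ = 0 ∧ c₃ = 0)) (p : ℝ × ℝ) :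
    ∃ᶠ q in 𝓝 p, c₀ + c₁ * q.1 + c₂ * q.2 + c₃ * (q.1 * q.2) ≠ 0 := by
  intro hq
  simp only [not_not] at hq
  have hlim (e₁ e₂ : ℝ) : Tendsto (fun δ : ℝ => (p.1 + e₁ * δ, p.2 + e₂ * δ)) (𝓝 0) (𝓝 p) :=
    Continuous.tendsto' (by fun_prop) 0 p (by simp)
  obtain ⟨δ, ⟨h₁, h₂, h₃⟩, hδ⟩ := ((((hlim 1 0).eventually hq).and
    (((hlim 0 1).eventually hq).and ((hlim 1 1).eventually hq))).filter_mono
      (nhdsWithin_le_nhds (s := {0}ᶜ)) |>.and self_mem_nhdsWithin).exists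
  have h₀ := hq.self_of_nhds
  have hδ : δ ≠ 0 := hδ
  have hc₃ : c₃ = 0 := by
    have : c₃ * δ ^ 2 = 0 := by linear_combination h₃ - h₁ - h₂ + h₀
    simpa [hδ] using this
  have hc₁ : c₁ = 0 := by
    have : c₁ * δ = 0 := by linear_combination h₁ - h₀ - p.2 * δ * hc₃
    simpa [hδ] using this
  have hc₂ : c₂ = 0 := by
    have : c₂ * δ = 0 := by linear_combination h₂ - h₀ - p.1 * δ * hc₃
    simpa [hδ] using this
  exact hc ⟨by linear_combination h₀ - p.1 * hc₁ - p.2 * hc₂ - p.1 * p.2 * hc₃, hc₁, hc₂, hc₃⟩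

theorem Real.exp_sub_one_ne_zero {x : ℝ} (hx : x ≠ 0) : exp x - 1 ≠ 0 :=
  sub_ne_zero.2 (exp_eq_one_iff x |>.not.2 hx)

/-- The `X`- and `Y`-coordinates of `connCurve n h s * γ = connCurve m h t` after `t` is
eliminated through the `Z`-coordinate. Here `E = exp ((Z h + n z₀) s)`, `en = exp (Z h + n z₀)`,
`em = exp (Z h + m z₀)`, `T = exp (Z γ)`, and `(dX, dY)`, `(u, v)` are the deviations of `γ`
and `h` from the one-parameter subgroup through `γ₀`. -/
def CurveIncidence (dX dY u v T en em E : ℝ) : Prop :=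
  E * (u * (T * (en - 1) - (em - 1)) - dX * ((en - 1) * (em - 1))) = u * (en - em) ∧
    E⁻¹ * (v * (T * en * (em - 1) - em * (en - 1)) - T * dY * ((en - 1) * (em - 1))) =
      v * T * (em - en)

/-- Eliminates `E` between the two identities of `CurveIncidence`, which are linear in `E` and in
`E⁻¹` respectively. -/
def resultant (dX dY u v T en em : ℝ) : ℝ :=
  (dX * ((en - 1) * (em - 1)) - u * (T * (en - 1) - (em - 1))) *
      (T * dY * ((en - 1) * (em - 1)) - v * (T * en * (em - 1) - em * (en - 1))) +
    T * (en - em) ^ 2 * (u * v)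

section Resultant

variable {dX dY u v T en em E : ℝ}

theorem CurveIncidence.resultant_eq_zero (hE : E ≠ 0) (h : CurveIncidence dX dY u v T en em E) :
    resultant dX dY u v T en em = 0 := by
  obtain ⟨hX, hY⟩ := h
  unfold resultant
  linear_combination
    (E⁻¹ * (v * (T * en * (em - 1) - em * (en - 1)) - T * dY * ((en - 1) * (em - 1)))) * hX +
    u * (en - em) * hY -
    (u * (T * (en - 1) - (em - 1)) - dX * ((en - 1) * (em - 1))) *
      (v * (T * en * (em - 1) - em * (en - 1)) - T * dY * ((en - 1) * (em - 1))) *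
      mul_inv_cancel₀ hE

theorem CurveIncidence.ne_zero_or_ne_zero (hE : E ≠ 0) (hE₁ : E ≠ 1) (hEn : E ≠ en)
    (hen : en ≠ 1) (hem : em ≠ 1) (henm : en ≠ em) (hu : u ≠ 0) (hv : v ≠ 0)
    (h : CurveIncidence dX dY u v T en em E) : dX ≠ 0 ∨ dY ≠ 0 := by
  by_contra! hd
  obtain ⟨hX, hY⟩ := h
  rw [hd.1] at hX
  rw [hd.2] at hY
  have hS₁ : E * (T * (en - 1) - (em - 1)) = en - em :=
    mul_left_cancel₀ hu (by linear_combination hX)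
  have hS₂ : E⁻¹ * (T * en * (em - 1) - em * (en - 1)) = T * (em - en) :=
    mul_left_cancel₀ hv (by linear_combination hY)
  have hfac : (en - 1) * (em - 1) * ((T - 1) * (T * en - em)) = 0 := by
    linear_combination E⁻¹ * (T * en * (em - 1) - em * (en - 1)) * hS₁ + (en - em) * hS₂ -
      (T * (en - 1) - (em - 1)) * (T * en * (em - 1) - em * (en - 1)) * mul_inv_cancel₀ hE
  rcases mul_eq_zero.1 hfac with h₀ | h₀
  · exact mul_ne_zero (sub_ne_zero.2 hen) (sub_ne_zero.2 hem) h₀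
  rcases mul_eq_zero.1 h₀ with hT | hT
  · refine hE₁ (mul_right_cancel₀ (sub_ne_zero.2 henm) ?_)
    linear_combination hS₁ - E * (en - 1) * hT
  · have hT₁ : 1 - T ≠ 0 := fun hT₁ => henm (by linear_combination hT + en * hT₁)
    refine hEn (mul_right_cancel₀ hT₁ ?_)
    linear_combination hS₁ + (1 - E) * hT

theorem frequently_resultant_ne_zero (hT : T ≠ 0) (hen : en ≠ 1) (hem : em ≠ 1)
    (henm : en ≠ em) (hd : dX ≠ 0 ∨ dY ≠ 0) (p : ℝ × ℝ) :
    ∃ᶠ q in 𝓝 p, resultant dX dY q.1 q.2 T en em ≠ 0 := by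
  set P := (en - 1) * (em - 1)
  set S₁ := T * (en - 1) - (em - 1)
  set S₂ := T * en * (em - 1) - em * (en - 1)
  have hP : P ≠ 0 := mul_ne_zero (sub_ne_zero.2 hen) (sub_ne_zero.2 hem)
  have hδ : T * (en - em) ^ 2 ≠ 0 := mul_ne_zero hT (pow_ne_zero 2 (sub_ne_zero.2 henm))
  have hc : ¬(dX * P * (T * dY * P) = 0 ∧ -S₁ * (T * dY * P) = 0 ∧ dX * P * -S₂ = 0 ∧
      S₁ * S₂ + T * (en - em) ^ 2 = 0) := by
    rintro ⟨-, h₁, h₂, h₃⟩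
    rcases hd with hd | hd
    · have : S₂ = 0 := by simpa [hd, hP] using h₂
      exact hδ (by simpa [this] using h₃)
    · have : S₁ = 0 := by simpa [hd, hP, hT] using h₁
      exact hδ (by simpa [this] using h₃)
  refine (frequently_bilinear_ne_zero hc p).mono fun q hq => ?_
  convert hq using 1
  simp only [resultant, P, S₁, S₂]
  ring

end Resultant

namespace Sol

instance : SecondCountableTopology Sol :=
  inferInstanceAs (SecondCountableTopology (ℝ × ℝ × ℝ))

instance : BaireSpace Sol := inferInstanceAs (BaireSpace (ℝ × ℝ × ℝ))

@[fun_prop] theorem continuous_X : Continuous X := continuous_fst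
@[fun_prop] theorem continuous_Y : Continuous Y := continuous_snd.fst
@[fun_prop] theorem continuous_Z : Continuous Z := continuous_snd.snd

@[fun_prop] theorem continuous_mk {α : Type*} [TopologicalSpace α] {f g k : α → ℝ}
    (hf : Continuous f) (hg : Continuous g) (hk : Continuous k) :
    Continuous fun p => mk (f p) (g p) (k p) :=
  hf.prodMk (hg.prodMk hk)

@[simp] theorem mk_X_Y_Z (g : Sol) : mk (X g) (Y g) (Z g) = g := rfl

instance : IsTopologicalGroup Sol where
  continuous_mul := by
    change Continuous fun p : Sol × Sol => mk (X p.1 + exp (Z p.1) * X p.2)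
      (Y p.1 + exp (-Z p.1) * Y p.2) (Z p.1 + Z p.2)
    fun_prop
  continuous_inv := by
    change Continuous fun g : Sol => mk (-(exp (-Z g) * X g)) (-(exp (Z g) * Y g)) (-Z g)
    fun_prop

theorem IsOneParam.map_zero {σ : ℝ → Sol} (hσ : IsOneParam σ) : σ 0 = 1 := by
  simpa using hσ.2 0 0

theorem IsOneParam.map_natCast_mul {σ : ℝ → Sol} (hσ : IsOneParam σ) (n : ℕ) (t : ℝ) :
    σ (n * t) = σ t ^ n := by
  induction n with
  | zero => simpa using hσ.map_zero
  | succ n ih => rw [Nat.cast_succ, add_one_mul, hσ.2, ih, pow_succ]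

theorem IsOneParam.conj {σ : ℝ → Sol} (hσ : IsOneParam σ) (w : Sol) :
    IsOneParam fun t => w * σ t * w⁻¹ :=
  ⟨by have := hσ.1; fun_prop, fun s t => by simp [hσ.2 s t, mul_assoc]⟩

open Pointwise in
theorem Blockable.of_smul {Γ : Subgroup Sol} {w : Sol} {m₁ m₂ : Sol ⧸ Γ}
    (h : Blockable Γ (w • m₁) (w • m₂)) : Blockable Γ m₁ m₂ := by
  classical
  obtain ⟨B, hm₁, hm₂, hB⟩ := h
  refine ⟨w⁻¹ • B, by simpa [Finset.mem_inv_smul_finset_iff],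
    by simpa [Finset.mem_inv_smul_finset_iff], fun σ hσ hσ1 => ?_⟩
  obtain ⟨t, ht, htB⟩ := hB _ (hσ.conj w) (by simp [mul_smul, hσ1])
  exact ⟨t, ht, by simpa [Finset.mem_inv_smul_finset_iff, mul_smul] using htB⟩

theorem exists_mem_Z_ne_zero {Γ : Subgroup Sol} [CompactSpace (Sol ⧸ Γ)] :
    ∃ γ ∈ Γ, Z γ ≠ 0 := by
  by_contra! hΓ
  have hZ : ∀ g h : Sol, QuotientGroup.leftRel Γ g h → Z g = Z h := fun g h hgh => by
    have := hΓ _ (QuotientGroup.leftRel_apply.1 hgh)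
    simp only [Z_mul, Z_inv] at this
    linarith
  have hsurj : Function.Surjective (Quotient.lift Z hZ) :=
    fun r => ⟨QuotientGroup.mk (mk 0 0 r), rfl⟩
  have := hsurj.compactSpace (continuous_Z.quotient_lift hZ)
  exact noncompact_univ ℝ isCompact_univ

def oneParam (a b c t : ℝ) : Sol :=
  mk (a * (exp (c * t) - 1)) (b * (exp (-(c * t)) - 1)) (c * t)

theorem isOneParam_oneParam (a b c : ℝ) : IsOneParam (oneParam a b c) := by
  refine ⟨by unfold oneParam; fun_prop, fun s t => ext ?_ ?_ ?_⟩ <;>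
    simp only [oneParam, X_mk, Y_mk, Z_mk, X_mul, Y_mul, Z_mul, mul_add, neg_add, exp_add] <;>
    ring

theorem exists_oneParam_eq {g : Sol} (hg : Z g ≠ 0) : ∃ a b, oneParam a b 1 (Z g) = g := by
  have hx := exp_sub_one_ne_zero hg
  have hy := exp_sub_one_ne_zero (neg_ne_zero.2 hg)
  exact ⟨X g / (exp (Z g) - 1), Y g / (exp (-Z g) - 1), ext (by simp [oneParam, hx])
    (by simp [oneParam, hy]) (by simp [oneParam])⟩

section Curves

variable (a b z₀ : ℝ)

/-- `(devX a h, devY b h)` is the horizontal offset of `h` from the point of the one-parameter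
subgroup `oneParam a b 1` at the same height `Z h`. -/
def devX (h : Sol) : ℝ := X h - a * (exp (Z h) - 1)

def devY (h : Sol) : ℝ := Y h - b * (exp (-Z h) - 1)

/-- The one-parameter subgroup whose value at time `1` is `h * oneParam a b 1 z₀ ^ n`. -/
def connCurve (n : ℕ) (h : Sol) : ℝ → Sol :=
  oneParam (a + devX a h / (exp (Z h + n * z₀) - 1))
    (b + devY b h / (exp (-(Z h + n * z₀)) - 1)) (Z h + n * z₀)

variable {a b z₀}

@[fun_prop] theorem continuous_devX : Continuous (devX a) := by unfold devX; fun_prop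

@[fun_prop] theorem continuous_devY : Continuous (devY b) := by unfold devY; fun_prop

theorem isOneParam_connCurve {n : ℕ} {h : Sol} : IsOneParam (connCurve a b z₀ n h) :=
  isOneParam_oneParam _ _ _

theorem connCurve_one {n : ℕ} {h : Sol} (hn : Z h + n * z₀ ≠ 0) :
    connCurve a b z₀ n h 1 = h * oneParam a b 1 z₀ ^ n := by
  have hx := exp_sub_one_ne_zero hn
  have hy := exp_sub_one_ne_zero (neg_ne_zero.2 hn)
  rw [← (isOneParam_oneParam a b 1).map_natCast_mul]
  refine ext ?_ ?_ ?_ <;>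
    simp only [connCurve, oneParam, devX, devY, X_mk, Y_mk, Z_mk, X_mul, Y_mul, Z_mul, mul_one,
      one_mul]
  · field_simp
    rw [exp_add]; ring
  · field_simp
    rw [neg_add, exp_add]; ring

theorem connCurve_mul_eq {n m : ℕ} {h γ : Sol} {s t : ℝ} (hn : Z h + n * z₀ ≠ 0)
    (hm : Z h + m * z₀ ≠ 0) (heq : connCurve a b z₀ n h s * γ = connCurve a b z₀ m h t) :
    CurveIncidence (devX a γ) (devY b γ) (devX a h) (devY b h) (exp (Z γ)) (exp (Z h + n * z₀))
      (exp (Z h + m * z₀)) (exp ((Z h + n * z₀) * s)) := by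
  have hz := congrArg Z heq
  have hx := congrArg X heq
  have hy := congrArg Y heq
  simp only [connCurve, oneParam, X_mk, Y_mk, Z_mk, X_mul, Y_mul, Z_mul] at hz hx hy
  have hE : exp ((Z h + m * z₀) * t) = exp ((Z h + n * z₀) * s) * exp (Z γ) := by
    rw [← exp_add, ← hz]
  have hF : exp (-((Z h + m * z₀) * t)) = (exp ((Z h + n * z₀) * s))⁻¹ * (exp (Z γ))⁻¹ := by
    rw [← hz, neg_add, exp_add, exp_neg, exp_neg]
  rw [hE] at hx
  rw [hF, exp_neg ((Z h + n * z₀) * s), exp_neg (Z h + n * z₀), exp_neg (Z h + m * z₀)] at hy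
  have hγX : devX a γ = X γ - a * (exp (Z γ) - 1) := rfl
  have hγY : devY b γ = Y γ - b * ((exp (Z γ))⁻¹ - 1) := by rw [devY, exp_neg]
  rw [CurveIncidence, hγX, hγY]
  have hn₁ : exp (Z h + n * z₀) ≠ 1 := by simpa using hn
  have hm₁ : exp (Z h + m * z₀) ≠ 1 := by simpa using hm
  have hn₀ : exp (Z h + n * z₀) ≠ 0 := (exp_pos _).ne'
  have hm₀ : exp (Z h + m * z₀) ≠ 0 := (exp_pos _).ne'
  have hE₀ : exp ((Z h + n * z₀) * s) ≠ 0 := (exp_pos _).ne'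
  have hT₀ : exp (Z γ) ≠ 0 := (exp_pos _).ne'
  generalize exp (Z h + n * z₀) = en at *
  generalize exp (Z h + m * z₀) = em at *
  generalize exp ((Z h + n * z₀) * s) = E at *
  generalize exp (Z γ) = T at *
  have hn₂ : en - 1 ≠ 0 := sub_ne_zero.2 hn₁
  have hm₂ : em - 1 ≠ 0 := sub_ne_zero.2 hm₁
  have hn₃ : 1 - en ≠ 0 := sub_ne_zero.2 hn₁.symm
  have hm₃ : 1 - em ≠ 0 := sub_ne_zero.2 hm₁.symm
  field_simp at hx hy ⊢
  exact ⟨by linear_combination -hx, by linear_combination -hy⟩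

theorem frequently_nhds_of_frequently_devX_devY {P : Sol → Prop} {h : Sol}
    (hP : ∃ᶠ q in 𝓝 (devX a h, devY b h),
      P (mk (q.1 + a * (exp (Z h) - 1)) (q.2 + b * (exp (-Z h) - 1)) (Z h))) :
    ∃ᶠ g in 𝓝 h, P g :=
  (Continuous.tendsto' (by fun_prop) _ h (by simp [devX, devY])).frequently hP

theorem eventually_residual_Z_add_ne_zero (r : ℝ) : ∀ᶠ h in residual Sol, Z h + r ≠ 0 := by
  have hZ : ∀ᶠ h in residual Sol, True → Z h ≠ -r :=
    eventually_residual_imp_ne continuous_Z fun h _ =>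
      (Continuous.tendsto' (f := fun z => mk (X h) (Y h) z) (by fun_prop) (Z h) h rfl).frequently
        (mem_closure_iff_frequently.1 (dense_compl_singleton (-r) (Z h)))
  filter_upwards [hZ] with h hh using fun h0 => hh trivial (eq_neg_of_add_eq_zero_left h0)

variable (a) in
theorem eventually_residual_devX_ne_zero : ∀ᶠ h in residual Sol, devX a h ≠ 0 := by
  have hX : ∀ᶠ h in residual Sol, True → devX a h ≠ 0 :=
    eventually_residual_imp_ne continuous_devX fun h _ =>
      frequently_nhds_of_frequently_devX_devY (a := a) (b := 0) <| by
        simpa [devX] using frequently_bilinear_ne_zero (c₀ := 0) (c₁ := 1) (c₂ := 0) (c₃ := 0)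
          (by simp) (devX a h, devY 0 h)
  simpa using hX

variable (b) in
theorem eventually_residual_devY_ne_zero : ∀ᶠ h in residual Sol, devY b h ≠ 0 := by
  have hY : ∀ᶠ h in residual Sol, True → devY b h ≠ 0 :=
    eventually_residual_imp_ne continuous_devY fun h _ =>
      frequently_nhds_of_frequently_devX_devY (a := 0) (b := b) <| by
        simpa [devY] using frequently_bilinear_ne_zero (c₀ := 0) (c₁ := 0) (c₂ := 1) (c₃ := 0)
          (by simp) (devX 0 h, devY b h)
  simpa using hY

theorem eventually_residual_resultant_ne_zero (hz₀ : z₀ ≠ 0) {n m : ℕ} (hnm : n ≠ m) {γ : Sol}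
    (hγ : devX a γ ≠ 0 ∨ devY b γ ≠ 0) :
    ∀ᶠ h in residual Sol, Z h + n * z₀ ≠ 0 ∧ Z h + m * z₀ ≠ 0 →
      resultant (devX a γ) (devY b γ) (devX a h) (devY b h) (exp (Z γ)) (exp (Z h + n * z₀))
        (exp (Z h + m * z₀)) ≠ 0 :=
  eventually_residual_imp_ne (by unfold resultant; fun_prop) fun h ⟨hn, hm⟩ =>
    frequently_nhds_of_frequently_devX_devY (a := a) (b := b) <| by
      simpa [devX, devY] using frequently_resultant_ne_zero (exp_pos _).ne'
        (exp_eq_one_iff _ |>.not.2 hn) (exp_eq_one_iff _ |>.not.2 hm)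
        (exp_injective.ne (by simpa [hz₀] using hnm)) hγ (devX a h, devY b h)

end Curves

variable {Γ : Subgroup Sol} {a b z₀ : ℝ} {h : Sol}

theorem Blockable.exists_connCurve_mem (hΓ : oneParam a b 1 z₀ ∈ Γ)
    (hZ : ∀ k : ℕ, Z h + k * z₀ ≠ 0) (hbl : Blockable Γ ↑(1 : Sol) ↑h) :
    ∃ B : Finset (Sol ⧸ Γ), ∀ n : ℕ,
      ∃ s ∈ Set.Ioo (0 : ℝ) 1, (connCurve a b z₀ n h s : Sol ⧸ Γ) ∈ B := by
  obtain ⟨B, h₁, hh, hB⟩ := hbl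
  refine ⟨B, fun n => ?_⟩
  have hend : (connCurve a b z₀ n h 1 : Sol ⧸ Γ) = h := by
    rw [connCurve_one (hZ n), QuotientGroup.mk_mul_of_mem _ (pow_mem hΓ n)]
  obtain ⟨s, hs, hsB⟩ := hB _ isOneParam_connCurve
    (by simpa only [MulAction.Quotient.smul_coe, smul_eq_mul, mul_one] using hend)
  simp only [MulAction.Quotient.smul_coe, smul_eq_mul, mul_one] at hsB
  refine ⟨s, ⟨hs.1.lt_of_ne ?_, hs.2.lt_of_ne ?_⟩, hsB⟩
  · rintro rfl
    exact h₁ (isOneParam_connCurve.map_zero ▸ hsB)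
  · rintro rfl
    exact hh (hend ▸ hsB)

theorem not_blockable_of_resultant_ne_zero (hz₀ : z₀ ≠ 0) (hΓ : oneParam a b 1 z₀ ∈ Γ)
    (hZ : ∀ k : ℕ, Z h + k * z₀ ≠ 0) (hu : devX a h ≠ 0) (hv : devY b h ≠ 0)
    (hres : ∀ n m : ℕ, n ≠ m → ∀ γ ∈ Γ, devX a γ ≠ 0 ∨ devY b γ ≠ 0 →
      resultant (devX a γ) (devY b γ) (devX a h) (devY b h) (exp (Z γ)) (exp (Z h + n * z₀))
        (exp (Z h + m * z₀)) ≠ 0) :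
    ¬Blockable Γ ↑(1 : Sol) ↑h := by
  intro hbl
  obtain ⟨B, hB⟩ := hbl.exists_connCurve_mem hΓ hZ
  choose s hs hsB using hB
  obtain ⟨n, m, hnm, hnm'⟩ := Finite.exists_ne_map_eq_of_infinite fun n => (⟨_, hsB n⟩ : B)
  set γ := (connCurve a b z₀ n h (s n))⁻¹ * connCurve a b z₀ m h (s m)
  have hγ : γ ∈ Γ := QuotientGroup.eq.1 (congrArg Subtype.val hnm')
  have hinc := connCurve_mul_eq (hZ n) (hZ m) (mul_inv_cancel_left _ _ : _ * γ = _)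
  have hE : exp ((Z h + n * z₀) * s n) ≠ 0 := (exp_pos _).ne'
  have hc (k : ℕ) : exp (Z h + k * z₀) ≠ 1 := exp_eq_one_iff _ |>.not.2 (hZ k)
  refine hres n m hnm γ hγ (hinc.ne_zero_or_ne_zero hE ?_ ?_ (hc n) (hc m) ?_ hu hv)
    (hinc.resultant_eq_zero hE)
  · exact exp_eq_one_iff _ |>.not.2 (mul_ne_zero (hZ n) (hs n).1.ne')
  · exact exp_injective.ne fun hsn =>
      (hs n).2.ne (mul_left_cancel₀ (hZ n) (hsn.trans (mul_one _).symm))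
  · exact exp_injective.ne (by simpa [hz₀] using hnm)

theorem eventually_residual_not_blockable [Countable Γ] {γ₀ : Sol} (hγ₀ : γ₀ ∈ Γ)
    (hz₀ : Z γ₀ ≠ 0) : ∀ᶠ h : Sol in residual Sol, ¬Blockable Γ ↑(1 : Sol) ↑h := by
  obtain ⟨a, b, hab⟩ := exists_oneParam_eq hz₀
  filter_upwards [
    eventually_countable_forall.2 fun k : ℕ => eventually_residual_Z_add_ne_zero (k * Z γ₀),
    eventually_residual_devX_ne_zero a, eventually_residual_devY_ne_zero b,
    eventually_countable_forall.2 fun n : ℕ => eventually_countable_forall.2 fun m : ℕ =>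
      eventually_imp_distrib_left.2 fun hnm => eventually_countable_forall.2 fun γ : Γ =>
        eventually_imp_distrib_left.2 fun hγ =>
          eventually_residual_resultant_ne_zero (a := a) (b := b) hz₀ hnm (γ := γ) hγ]
    with h hZ hu hv hres
  exact not_blockable_of_resultant_ne_zero hz₀ (by rwa [hab]) hZ hu hv
    fun n m hnm γ hγ hd => hres n m hnm ⟨γ, hγ⟩ hd ⟨hZ n, hZ m⟩

end Sol

/-- Theorem 1 of the paper: for every lattice `Γ` in `Sol`, the set of
non-blockable pairs is dense in `Sol/Γ × Sol/Γ`; in particular `Sol/Γ` is non-blockable. -/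
theorem stmt16 (Γ : Subgroup Sol) (hdisc : DiscreteTopology Γ)
    (hcompact : CompactSpace (Sol ⧸ Γ)) :
    Dense {p : (Sol ⧸ Γ) × (Sol ⧸ Γ) | ¬ Sol.Blockable Γ p.1 p.2} := by
  have : Countable Γ := countable_of_Lindelof_of_discrete
  obtain ⟨γ₀, hγ₀, hz₀⟩ := Sol.exists_mem_Z_ne_zero (Γ := Γ)
  have hgeneric := dense_of_mem_residual (Sol.eventually_residual_not_blockable hγ₀ hz₀)
  let F : Sol × Sol → (Sol ⧸ Γ) × (Sol ⧸ Γ) :=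
    fun p => (p.1 • ((1 : Sol) : Sol ⧸ Γ), p.1 • (p.2 : Sol ⧸ Γ))
  have hF : Continuous F := by fun_prop
  have hsurj : Function.Surjective F := by
    rintro ⟨p, q⟩
    obtain ⟨x, rfl⟩ := QuotientGroup.mk_surjective p
    obtain ⟨y, rfl⟩ := QuotientGroup.mk_surjective q
    exact ⟨(x, x⁻¹ * y), by simp [F]⟩
  refine (hsurj.denseRange.dense_image hF (dense_univ.prod hgeneric)).mono ?_
  rintro _ ⟨⟨w, h⟩, ⟨-, hh⟩, rfl⟩
  exact fun hb => hh hb.of_smul
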